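/- Let S be a random walk with S_0 = 0 and i.i.d. increments, and suppose for constants λ₂ > λ₁ > 0 and C > 0 we have g(x) ≤ C x^{λ₁} and h(x,y) ≤ C/(1+x+y)^{λ₂} for x, y ≥ 0. Then with a_n = e^{−S_n}, B_{1,n} = Σ_{k=1}^{n−1} e^{−S_k}, and τ(n) the first minimum time, for all 0 ≤ j ≤ n: E[g(a_n) h(a_n, B_{1,n}); τ(n) = j] ≤ C² E[e^{(λ₂−λ₁)S_j}; τ(j) = j] · E[e^{−λ₁ S_{n−j}}; L_{n−j} ≥ 0]. -/

import Mathlib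

/-!
Since `S₀ = 0` and `j ≤ n`, the term `e^{-S_j}` occurs in `1 + a_n + B_{1,n}`, so
`h(a_n, B_{1,n}) ≤ C e^{λ₂ S_j}` and hence
`g(a_n) h(a_n, B_{1,n}) ≤ C² e^{(λ₂-λ₁) S_j} e^{-λ₁ (S_n - S_j)}` for every `j ≤ n`.
On `{τ(n) = j}` the walk is strictly above `S_j` before `j` and stays at or above `S_j`
afterwards, so we may insert the indicators of `{τ(j) = j}` and of the event that the walk
restarted at time `j` stays nonnegative up to time `n - j`. The first factor depends on
`X_0, …, X_{j-1}` only, the second on the shifted sequence `(X_{j+i})ᵢ`; independence of past and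
future splits the expectation, and the shifted sequence has the law of `(X_i)ᵢ`.
-/

open MeasureTheory ProbabilityTheory

noncomputable def firstMin {Ω : Type*} (S : ℕ → Ω → ℝ) (n : ℕ) (ω : Ω) : ℕ :=
  sInf {k | k ≤ n ∧ ∀ m ≤ n, S k ω ≤ S m ω}

open Finset Real

section FirstMin

variable {Ω : Type*}

theorem firstMin_eq_iff (S : ℕ → Ω → ℝ) {n j : ℕ} (hj : j ≤ n) (ω : Ω) :
    firstMin S n ω = j ↔ (∀ k < j, S j ω < S k ω) ∧ ∀ k ≤ n, S j ω ≤ S k ω := by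
  set s := {k | k ≤ n ∧ ∀ m ≤ n, S k ω ≤ S m ω}
  obtain ⟨i, hi, hmin⟩ := exists_min_image (range (n + 1)) (S · ω) nonempty_range_add_one
  have hne : s.Nonempty :=
    ⟨i, Nat.lt_succ_iff.1 (mem_range.1 hi), fun m hm => hmin m (by simpa [Nat.lt_succ_iff])⟩
  have hleast : firstMin S n ω = j ↔ IsLeast s j :=
    ⟨fun h => h ▸ ⟨Nat.sInf_mem hne, fun k hk => Nat.sInf_le hk⟩, IsLeast.csInf_eq⟩
  rw [hleast]
  constructor
  · rintro ⟨⟨-, hjmin⟩, hlower⟩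
    refine ⟨fun k hk => ?_, hjmin⟩
    obtain ⟨m, hm, hlt⟩ : ∃ m ≤ n, S m ω < S k ω := by
      by_contra! hkmin
      exact hk.not_ge (hlower ⟨(hk.trans_le hj).le, hkmin⟩)
    exact (hjmin m hm).trans_lt hlt
  · rintro ⟨hstrict, hjmin⟩
    exact ⟨⟨hj, hjmin⟩, fun k ⟨_, hkmin⟩ => not_lt.1 fun hk => (hkmin j hj).not_gt (hstrict k hk)⟩

theorem firstMin_self_eq_iff (S : ℕ → Ω → ℝ) (j : ℕ) (ω : Ω) :
    firstMin S j ω = j ↔ ∀ k < j, S j ω < S k ω := by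
  rw [firstMin_eq_iff S le_rfl]
  refine ⟨And.left, fun h => ⟨h, fun k hk => ?_⟩⟩
  rcases hk.lt_or_eq with hk | rfl
  exacts [(h k hk).le, le_rfl]

theorem firstMin_self_eq_of_firstMin_eq {S : ℕ → Ω → ℝ} {n j : ℕ} (hj : j ≤ n) {ω : Ω}
    (hω : firstMin S n ω = j) : firstMin S j ω = j :=
  (firstMin_self_eq_iff S j ω).2 ((firstMin_eq_iff S hj ω).1 hω).1

theorem measurableSet_firstMin_eq {mΩ : MeasurableSpace Ω} {S : ℕ → Ω → ℝ} {n j : ℕ}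
    (hj : j ≤ n) (hS : ∀ k ≤ n, Measurable (S k)) :
    MeasurableSet {ω | firstMin S n ω = j} := by
  simp_rw [firstMin_eq_iff S hj, Set.ofPred_and, Set.ofPred_forall]
  exact .inter (.iInter fun k => .iInter fun hk => measurableSet_lt (hS j hj) (hS k (by omega)))
    (.iInter fun k => .iInter fun hk => measurableSet_le (hS j hj) (hS k hk))

end FirstMin

theorem le_add_add_sum_Icc {f : ℕ → ℝ} (hf : ∀ k, 0 ≤ f k) {n j : ℕ} (hj : j ≤ n) :
    f j ≤ f 0 + f n + ∑ k ∈ Icc 1 (n - 1), f k := by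
  have hsum : 0 ≤ ∑ k ∈ Icc 1 (n - 1), f k := sum_nonneg fun k _ => hf k
  rcases Nat.eq_zero_or_pos j with rfl | hj0
  · linarith [hf n]
  rcases hj.eq_or_lt with rfl | hjn
  · linarith [hf 0]
  have : f j ≤ ∑ k ∈ Icc 1 (n - 1), f k :=
    single_le_sum (fun k _ => hf k) (mem_Icc.2 ⟨hj0, by omega⟩)
  linarith [hf 0, hf n]

theorem gh_le_exp_mul_exp {lam₁ lam₂ C : ℝ} (hlam₂ : 0 ≤ lam₂) (hC : 0 ≤ C) {g : ℝ → ℝ}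
    {h : ℝ → ℝ → ℝ} (hg : ∀ x : ℝ, 0 ≤ x → g x ≤ C * x ^ lam₁)
    (hh0 : ∀ x y, 0 ≤ x → 0 ≤ y → 0 ≤ h x y)
    (hh : ∀ x y : ℝ, 0 ≤ x → 0 ≤ y → h x y ≤ C / (1 + x + y) ^ lam₂)
    (s : ℕ → ℝ) (hs0 : s 0 = 0) {n j : ℕ} (hj : j ≤ n) :
    g (exp (-s n)) * h (exp (-s n)) (∑ k ∈ Icc 1 (n - 1), exp (-s k))
      ≤ C ^ 2 * (exp ((lam₂ - lam₁) * s j) * exp (-lam₁ * (s n - s j))) := by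
  set x := exp (-s n)
  set y := ∑ k ∈ Icc 1 (n - 1), exp (-s k)
  have hx : 0 ≤ x := (exp_pos _).le
  have hy : 0 ≤ y := sum_nonneg fun k _ => (exp_pos _).le
  have hgx : g x ≤ C * exp (-lam₁ * s n) := by
    refine (hg x hx).trans_eq ?_
    rw [← exp_mul]
    ring_nf
  have hhxy : h x y ≤ C * exp (lam₂ * s j) := calc
    h x y ≤ C / (1 + x + y) ^ lam₂ := hh x y hx hy
    _ ≤ C / exp (-s j) ^ lam₂ := by
      have := le_add_add_sum_Icc (f := fun k => exp (-s k)) (fun k => (exp_pos _).le) hj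
      simp only [hs0, neg_zero, exp_zero] at this
      gcongr
    _ = C * exp (lam₂ * s j) := by
      rw [← exp_mul, div_eq_mul_inv, ← exp_neg]
      ring_nf
  calc g x * h x y ≤ (C * exp (-lam₁ * s n)) * (C * exp (lam₂ * s j)) :=
        mul_le_mul hgx hhxy (hh0 x y hx hy) (by positivity)
    _ = C ^ 2 * (exp ((lam₂ - lam₁) * s j) * exp (-lam₁ * (s n - s j))) := by
      rw [mul_mul_mul_comm, ← exp_add, ← exp_add]
      ring_nf

theorem indicator_exp_mem_Icc {α : Type*} {s : Set α} {f : α → ℝ} (hf : ∀ x ∈ s, f x ≤ 0)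
    (x : α) : s.indicator (fun x => exp (f x)) x ∈ Set.Icc 0 1 := by
  by_cases hx : x ∈ s
  · rw [Set.indicator_of_mem hx]
    exact ⟨(exp_pos _).le, exp_le_one_iff.2 (hf x hx)⟩
  · simp [Set.indicator_of_notMem hx]

theorem setIntegral_le_integral_of_forall_mem_le {α : Type*} [MeasurableSpace α]
    {μ : Measure α} {s : Set α} {f g : α → ℝ} (hs : MeasurableSet s) (hf : ∀ x, 0 ≤ f x)
    (hgi : Integrable g μ) (hg : ∀ x, 0 ≤ g x) (hfg : ∀ x ∈ s, f x ≤ g x) :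
    ∫ x in s, f x ∂μ ≤ ∫ x, g x ∂μ :=
  (integral_mono_of_nonneg (.of_forall hf) hgi.integrableOn
    ((ae_restrict_iff' hs).2 (.of_forall hfg))).trans
    (setIntegral_le_integral hgi (.of_forall hg))

theorem measurableSet_forall_le_nonneg {α : Type*} [MeasurableSpace α] {f : ℕ → α → ℝ}
    (hf : ∀ k, Measurable (f k)) (m : ℕ) : MeasurableSet {x | ∀ k ≤ m, 0 ≤ f k x} := by
  simp_rw [Set.ofPred_forall]
  exact .iInter fun k => .iInter fun _ => measurableSet_le measurable_const (hf k)

theorem measurable_iSup_comap_of_mem {Ω β : Type*} [MeasurableSpace β] {X : ℕ → Ω → β}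
    {s : Set ℕ} {i : ℕ} (hi : i ∈ s) :
    Measurable[⨆ k ∈ s, MeasurableSpace.comap (X k) inferInstance] (X i) :=
  (comap_measurable (X i)).mono (le_iSup₂_of_le i hi le_rfl) le_rfl

section RandomWalk

variable {Ω : Type*} {X S : ℕ → Ω → ℝ}

theorem walk_zero (hS : ∀ k ω, S k ω = ∑ i ∈ range k, X i ω) (ω : Ω) : S 0 ω = 0 := by
  simp [hS]

theorem sum_range_shift_eq_sub (hS : ∀ k ω, S k ω = ∑ i ∈ range k, X i ω) (j k : ℕ) (ω : Ω) :
    ∑ i ∈ range k, X (j + i) ω = S (j + k) ω - S j ω := by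
  rw [hS, hS, sum_range_add]
  ring

theorem measurable_walk {mΩ : MeasurableSpace Ω} (hS : ∀ k ω, S k ω = ∑ i ∈ range k, X i ω)
    {k : ℕ} (hX : ∀ i < k, Measurable (X i)) : Measurable (S k) := by
  rw [show S k = fun ω => ∑ i ∈ range k, X i ω from funext (hS k)]
  exact Finset.measurable_sum _ fun i hi => hX i (mem_range.1 hi)

end RandomWalk

section Weights

variable {Ω : Type*}

noncomputable def firstMinWeight (S : ℕ → Ω → ℝ) (a : ℝ) (j : ℕ) : Ω → ℝ :=
  {ω | firstMin S j ω = j}.indicator fun ω => exp (a * S j ω)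

/-- Stated for the increments `x` rather than the walk, so that it can be evaluated on the
shifted sequence `(X_{j+i})ᵢ`. -/
noncomputable def nonnegWalkWeight (a : ℝ) (m : ℕ) : (ℕ → ℝ) → ℝ :=
  {x | ∀ k ≤ m, 0 ≤ ∑ i ∈ range k, x i}.indicator fun x => exp (-a * ∑ i ∈ range m, x i)

theorem firstMinWeight_mem_Icc {S : ℕ → Ω → ℝ} (hS0 : ∀ ω, S 0 ω = 0) {a : ℝ} (ha : 0 ≤ a)
    (j : ℕ) (ω : Ω) : firstMinWeight S a j ω ∈ Set.Icc 0 1 :=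
  indicator_exp_mem_Icc (fun ω hω => by
    have hSj : S j ω ≤ S 0 ω := ((firstMin_eq_iff S le_rfl ω).1 hω).2 0 j.zero_le
    exact mul_nonpos_of_nonneg_of_nonpos ha (hS0 ω ▸ hSj)) ω

theorem nonnegWalkWeight_mem_Icc {a : ℝ} (ha : 0 ≤ a) (m : ℕ) (x : ℕ → ℝ) :
    nonnegWalkWeight a m x ∈ Set.Icc 0 1 := by
  unfold nonnegWalkWeight
  refine indicator_exp_mem_Icc (fun y hy => ?_) x
  exact mul_nonpos_of_nonpos_of_nonneg (neg_nonpos.2 ha) (hy m le_rfl)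

theorem measurable_firstMinWeight {mΩ : MeasurableSpace Ω} {S : ℕ → Ω → ℝ} (a : ℝ) {j : ℕ}
    (hS : ∀ k ≤ j, Measurable (S k)) : Measurable (firstMinWeight S a j) :=
  ((hS j le_rfl).const_mul a).exp.indicator (measurableSet_firstMin_eq le_rfl hS)

theorem measurable_nonnegWalkWeight (a : ℝ) (m : ℕ) : Measurable (nonnegWalkWeight a m) :=
  Measurable.indicator (by fun_prop) (measurableSet_forall_le_nonneg (by fun_prop) m)

theorem integral_firstMinWeight [MeasurableSpace Ω] {μ : Measure Ω} {S : ℕ → Ω → ℝ} (a : ℝ)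
    {j : ℕ} (hS : ∀ k ≤ j, Measurable (S k)) :
    ∫ ω, firstMinWeight S a j ω ∂μ = ∫ ω in {ω | firstMin S j ω = j}, exp (a * S j ω) ∂μ :=
  integral_indicator (measurableSet_firstMin_eq le_rfl hS)

variable {X S : ℕ → Ω → ℝ}

theorem firstMinWeight_of_firstMin_eq (a : ℝ) {n j : ℕ} (hj : j ≤ n) {ω : Ω}
    (hω : firstMin S n ω = j) : firstMinWeight S a j ω = exp (a * S j ω) :=
  Set.indicator_of_mem (s := {ω | firstMin S j ω = j}) (firstMin_self_eq_of_firstMin_eq hj hω) _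

theorem nonnegWalkWeight_shift_of_firstMin_eq (hS : ∀ k ω, S k ω = ∑ i ∈ range k, X i ω)
    (a : ℝ) {n j : ℕ} (hj : j ≤ n) {ω : Ω} (hω : firstMin S n ω = j) :
    nonnegWalkWeight a (n - j) (fun i => X (j + i) ω) = exp (-a * (S n ω - S j ω)) := by
  rw [nonnegWalkWeight, Set.indicator_of_mem, sum_range_shift_eq_sub hS, Nat.add_sub_cancel' hj]
  intro k hk
  rw [sum_range_shift_eq_sub hS, sub_nonneg]
  exact ((firstMin_eq_iff S hj ω).1 hω).2 _ (by omega)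

theorem integral_nonnegWalkWeight [MeasurableSpace Ω] {μ : Measure Ω}
    (hS : ∀ k ω, S k ω = ∑ i ∈ range k, X i ω) (hSm : ∀ k, Measurable (S k)) (a : ℝ) (m : ℕ) :
    ∫ ω, nonnegWalkWeight a m (fun i => X i ω) ∂μ
      = ∫ ω in {ω | ∀ k ≤ m, 0 ≤ S k ω}, exp (-a * S m ω) ∂μ := by
  rw [← integral_indicator (measurableSet_forall_le_nonneg hSm m)]
  congr with ω
  simp only [nonnegWalkWeight, hS]
  rfl

theorem gh_le_firstMinWeight_mul_nonnegWalkWeight (hS : ∀ k ω, S k ω = ∑ i ∈ range k, X i ω)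
    {lam₁ lam₂ C : ℝ} (hlam₂ : 0 ≤ lam₂) (hC : 0 ≤ C) {g : ℝ → ℝ} {h : ℝ → ℝ → ℝ}
    (hg : ∀ x : ℝ, 0 ≤ x → g x ≤ C * x ^ lam₁) (hh0 : ∀ x y, 0 ≤ x → 0 ≤ y → 0 ≤ h x y)
    (hh : ∀ x y : ℝ, 0 ≤ x → 0 ≤ y → h x y ≤ C / (1 + x + y) ^ lam₂)
    {n j : ℕ} (hj : j ≤ n) {ω : Ω} (hω : firstMin S n ω = j) :
    g (exp (-S n ω)) * h (exp (-S n ω)) (∑ k ∈ Icc 1 (n - 1), exp (-S k ω))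
      ≤ C ^ 2 * (firstMinWeight S (lam₂ - lam₁) j ω *
        nonnegWalkWeight lam₁ (n - j) (fun i => X (j + i) ω)) := by
  rw [firstMinWeight_of_firstMin_eq _ hj hω, nonnegWalkWeight_shift_of_firstMin_eq hS _ hj hω]
  exact gh_le_exp_mul_exp hlam₂ hC hg hh0 hh (S · ω) (walk_zero hS ω) hj

end Weights

section IIDIncrements

variable {Ω β : Type*} [MeasurableSpace Ω] [MeasurableSpace β] {μ : Measure Ω} {X : ℕ → Ω → β}

theorem ProbabilityTheory.iIndepFun.identDistrib_shift (hmeas : ∀ i, Measurable (X i))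
    (hindep : iIndepFun X μ) (hident : ∀ i, IdentDistrib (X i) (X 0) μ μ) (j : ℕ) :
    IdentDistrib (fun ω i => X (j + i) ω) (fun ω i => X i ω) μ μ where
  aemeasurable_fst := (measurable_pi_iff.2 fun i => hmeas (j + i)).aemeasurable
  aemeasurable_snd := (measurable_pi_iff.2 hmeas).aemeasurable
  map_eq := by
    rw [(hindep.precomp (add_right_injective j)).map_fun_eq_infinitePi_map (fun i => hmeas _),
      hindep.map_fun_eq_infinitePi_map hmeas]
    congr with i : 1
    rw [(hident _).map_eq, (hident i).map_eq]

theorem ProbabilityTheory.iIndepFun.integral_mul_comp_shift (hmeas : ∀ i, Measurable (X i))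
    (hindep : iIndepFun X μ) (hident : ∀ i, IdentDistrib (X i) (X 0) μ μ) {j : ℕ} {F : Ω → ℝ}
    (hF : Measurable[⨆ i ∈ Set.Iio j, MeasurableSpace.comap (X i) inferInstance] F)
    {Φ : (ℕ → β) → ℝ} (hΦ : Measurable Φ) :
    ∫ ω, F ω * Φ (fun i => X (j + i) ω) ∂μ = (∫ ω, F ω ∂μ) * ∫ ω, Φ (fun i => X i ω) ∂μ := by
  have hpast_future : Indep (⨆ i ∈ Set.Iio j, MeasurableSpace.comap (X i) inferInstance)
      (⨆ i ∈ Set.Ici j, MeasurableSpace.comap (X i) inferInstance) μ :=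
    indep_iSup_of_disjoint (fun i => (hmeas i).comap_le)
      ((iIndepFun_iff_iIndep _ _ _).1 hindep) (Set.Iio_disjoint_Ici le_rfl)
  have hshift : Measurable[⨆ i ∈ Set.Ici j, MeasurableSpace.comap (X i) inferInstance]
      (fun ω i => X (j + i) ω) :=
    @measurable_pi_lambda _ _ _ (⨆ i ∈ Set.Ici j, _) _ _ fun i =>
      measurable_iSup_comap_of_mem (Nat.le_add_right j i)
  have hindepFG : IndepFun F (fun ω => Φ (fun i => X (j + i) ω)) μ :=
    indep_of_indep_of_le_right (indep_of_indep_of_le_left hpast_future hF.comap_le)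
      (hΦ.comp hshift).comap_le
  have hFmeas : Measurable F := hF.mono (iSup₂_le fun i _ => (hmeas i).comap_le) le_rfl
  rw [hindepFG.integral_fun_mul_eq_mul_integral hFmeas.aestronglyMeasurable
    (hΦ.comp (measurable_pi_iff.2 fun i => hmeas (j + i))).aestronglyMeasurable]
  exact congrArg _ ((hindep.identDistrib_shift hmeas hident j).comp hΦ).integral_eq

end IIDIncrements

/-- If `0 ≤ g(x) ≤ C x^{λ₁}` and `0 ≤ h(x,y) ≤ C/(1+x+y)^{λ₂}` with
`0 < λ₁ < λ₂`, then for all `0 ≤ j ≤ n`,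
`E[g(a_n) h(a_n, B_{1,n}); τ(n) = j]
  ≤ C² E[e^{(λ₂−λ₁)S_j}; τ(j) = j] · E[e^{−λ₁ S_{n−j}}; L_{n−j} ≥ 0]`,
where `a_n = e^{−S_n}` and `B_{1,n} = ∑_{k=1}^{n−1} e^{−S_k}`. -/
theorem gh_first_min_bound
    {Ω : Type*} [MeasurableSpace Ω] {μ : Measure Ω} [IsProbabilityMeasure μ]
    (X : ℕ → Ω → ℝ) (hmeas : ∀ i, Measurable (X i))
    (hindep : iIndepFun X μ)
    (hident : ∀ i, IdentDistrib (X i) (X 0) μ μ)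
    (S : ℕ → Ω → ℝ) (hS : ∀ k ω, S k ω = ∑ j ∈ Finset.range k, X j ω)
    (lam₁ lam₂ C : ℝ) (h0 : 0 < lam₁) (h12 : lam₁ < lam₂) (hC : 0 < C)
    (g : ℝ → ℝ) (hg0 : ∀ x, 0 ≤ x → 0 ≤ g x)
    (hg : ∀ x : ℝ, 0 ≤ x → g x ≤ C * x ^ lam₁)
    (h : ℝ → ℝ → ℝ) (hh0 : ∀ x y, 0 ≤ x → 0 ≤ y → 0 ≤ h x y)
    (hh : ∀ x y : ℝ, 0 ≤ x → 0 ≤ y → h x y ≤ C / (1 + x + y) ^ lam₂)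
    (n j : ℕ) (hj : j ≤ n) :
    ∫ ω in {ω | firstMin S n ω = j},
        g (Real.exp (-(S n ω))) *
          h (Real.exp (-(S n ω))) (∑ k ∈ Finset.Icc 1 (n - 1), Real.exp (-(S k ω))) ∂μ
      ≤ C ^ 2 *
        ((∫ ω in {ω | firstMin S j ω = j}, Real.exp ((lam₂ - lam₁) * S j ω) ∂μ) *
          (∫ ω in {ω | ∀ k ≤ n - j, 0 ≤ S k ω}, Real.exp (-lam₁ * S (n - j) ω) ∂μ)) := by
  set F := firstMinWeight S (lam₂ - lam₁) j
  set G := fun ω => nonnegWalkWeight lam₁ (n - j) (fun i => X (j + i) ω)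
  have hSm : ∀ k, Measurable (S k) := fun k => measurable_walk hS fun i _ => hmeas i
  have hF : Measurable[⨆ i ∈ Set.Iio j, MeasurableSpace.comap (X i) inferInstance] F :=
    measurable_firstMinWeight _ fun k hk =>
      measurable_walk hS fun i hi => measurable_iSup_comap_of_mem (hi.trans_le hk)
  have hFG01 (ω : Ω) : F ω * G ω ∈ Set.Icc 0 1 := by
    obtain ⟨hF0, hF1⟩ := firstMinWeight_mem_Icc (walk_zero hS) (sub_nonneg.2 h12.le) j ω
    obtain ⟨hG0, hG1⟩ := nonnegWalkWeight_mem_Icc h0.le (n - j) (fun i => X (j + i) ω)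
    exact ⟨mul_nonneg hF0 hG0, mul_le_one₀ hF1 hG0 hG1⟩
  have hFG : Measurable fun ω => F ω * G ω := (measurable_firstMinWeight _ fun k _ => hSm k).mul
    ((measurable_nonnegWalkWeight _ _).comp (measurable_pi_lambda _ fun i => hmeas (j + i)))
  have hint : Integrable (fun ω => C ^ 2 * (F ω * G ω)) μ :=
    (Integrable.of_mem_Icc 0 1 hFG.aemeasurable (.of_forall hFG01)).const_mul _
  calc _ ≤ ∫ ω, C ^ 2 * (F ω * G ω) ∂μ :=
        setIntegral_le_integral_of_forall_mem_le (measurableSet_firstMin_eq hj fun k _ => hSm k)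
          (fun ω => mul_nonneg (hg0 _ (exp_pos _).le)
            (hh0 _ _ (exp_pos _).le (sum_nonneg fun k _ => (exp_pos _).le)))
          hint (fun ω => mul_nonneg (sq_nonneg C) (hFG01 ω).1) fun ω =>
            gh_le_firstMinWeight_mul_nonnegWalkWeight hS (h0.trans h12).le hC.le hg hh0 hh hj
    _ = _ := by
        rw [integral_const_mul, hindep.integral_mul_comp_shift hmeas hident hF
          (measurable_nonnegWalkWeight _ _), integral_firstMinWeight _ fun k _ => hSm k,
          integral_nonnegWalkWeight hS hSm]
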